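/- Let p be a prime. A ring R is a finite commutative local ring with exactly one nontrivial ideal and residue field of characteristic p if and only if R is isomorphic to one of the following: (1) ℤ_p[X, Y]/(g(X), Y²) for some monic irreducible polynomial g(X) ∈ ℤ_p[X]; (2) ℤ_{p²}[X]/(g₂(X) + p·w(X)) for some monic irreducible polynomial g(X) ∈ ℤ_p[X] and some polynomial w(X) ∈ ℤ_{p²}[X] with deg w(X) < deg g(X), where g₂(X) denotes the lift of g(X) to ℤ_{p²}[X] with coefficients in {0, 1, …, p−1}. -/

import Mathlib

set_option synthInstance.maxHeartbeats 400000

open Polynomial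

/-- The coefficientwise lift of a polynomial over `ℤ/p` to a polynomial over `ℤ/q`:
each coefficient `a ∈ {0, 1, …, p-1}` is replaced by the image of the natural number
`a.val` in `ZMod q`.  (This is the polynomial `f_r` of the paper when `q = p^r`.) -/
noncomputable def polyLift (p q : ℕ) (f : Polynomial (ZMod p)) : Polynomial (ZMod q) :=
  ∑ i ∈ f.support, Polynomial.C (((f.coeff i).val : ℕ) : ZMod q) * Polynomial.X ^ i

/-- `R` is a finite commutative local ring with exactly `k` nontrivial ideals
(ideals different from `⊥` and `⊤`) whose residue field has characteristic `p`. -/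
def IsFiniteLocalWithNontrivialIdeals (R : Type*) [CommRing R] (k p : ℕ) : Prop :=
  Finite R ∧ ∃ h : IsLocalRing R, haveI := h
    CharP (IsLocalRing.ResidueField R) p ∧
    Nat.card {I : Ideal R // I ≠ ⊥ ∧ I ≠ ⊤} = k

/-!
Having a single nontrivial ideal forces `m² = 0` for the maximal ideal `m` (Nakayama), and then
`m = (t)` for every nonzero `t ∈ m`. Conversely, a finite ring containing some `t ≠ 0` with
`t² = 0` and `(t)` maximal is local, and `(t)` is its only nontrivial ideal: any nonzero
element of `(t)` is `c t` with `c ∉ (t)`, hence with `c` a unit. Both models are of this form, with `t = Y`, resp. `t = p`, and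
residue field `𝔽_p[X]/(g)`.

For the converse, `p ∈ m` gives `p² = 0`, so `R` has characteristic `p` or `p²`. Let `α`
generate the residue field over `𝔽_p`, with minimal polynomial `g`. In characteristic `p`,
Hensel's lemma (a single Newton step, as `m² = 0`) lifts `α` to a root of `g` in `R`, which
yields a map `(𝔽_p[X]/(g))[Y]/(Y²) → R` with `Y ↦ t`. In characteristic `p²`, a lift `x` of `α`
satisfies `g₂(x) = c p`; choosing `w` with `w(x) ≡ -c` modulo `m` makes `x` a root of
`g₂ + p w`, which yields a map `ℤ_{p²}[X]/(g₂ + p w) → R`. Each map is surjective because it is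
surjective modulo `m = (t)` and hits `t`, and injective because its kernel is a proper ideal
missing the generator of the unique nontrivial ideal of the model.
-/

open IsLocalRing

section PolyLift

variable {p q : ℕ}

theorem coeff_polyLift (f : (ZMod p)[X]) (n : ℕ) :
    (polyLift p q f).coeff n = ((f.coeff n).val : ZMod q) := by
  rw [polyLift, finsetSum_coeff]
  simp only [coeff_C_mul, coeff_X_pow, mul_ite, mul_one, mul_zero]
  rw [Finset.sum_ite_eq f.support n (fun i => ((f.coeff i).val : ZMod q))]
  split_ifs with h
  · rfl
  · rw [notMem_support_iff.mp h, ZMod.val_zero, Nat.cast_zero]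

theorem map_polyLift [NeZero p] (h : p ∣ q) (f : (ZMod p)[X]) :
    (polyLift p q f).map (ZMod.castHom h (ZMod p)) = f := by
  ext n
  rw [coeff_map, coeff_polyLift, map_natCast, ZMod.natCast_val, ZMod.cast_id]

theorem degree_polyLift_le (f : (ZMod p)[X]) : (polyLift p q f).degree ≤ f.degree :=
  (degree_le_iff_coeff_zero _ _).mpr fun n hn => by
    rw [coeff_polyLift, coeff_eq_zero_of_degree_lt hn, ZMod.val_zero, Nat.cast_zero]

variable [Fact (1 < p)] {f : (ZMod p)[X]}

theorem coeff_polyLift_natDegree (hf : f.Monic) : (polyLift p q f).coeff f.natDegree = 1 := by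
  rw [coeff_polyLift, hf.coeff_natDegree, ZMod.val_one, Nat.cast_one]

theorem monic_polyLift (hf : f.Monic) : (polyLift p q f).Monic :=
  monic_of_natDegree_le_of_coeff_eq_one _ (natDegree_le_natDegree (degree_polyLift_le f))
    (coeff_polyLift_natDegree hf)

variable [Fact (1 < q)]

theorem degree_polyLift (hf : f.Monic) : (polyLift p q f).degree = f.degree := by
  refine le_antisymm (degree_polyLift_le f) ?_
  rw [degree_eq_natDegree hf.ne_zero]
  exact le_degree_of_ne_zero (by rw [coeff_polyLift_natDegree hf]; exact one_ne_zero)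

theorem degree_natCast_mul_lt_degree_polyLift (hf : f.Monic) {w : (ZMod q)[X]}
    (hw : w.degree < f.degree) (n : ℕ) : ((n : (ZMod q)[X]) * w).degree < (polyLift p q f).degree :=
  calc ((n : (ZMod q)[X]) * w).degree ≤ (n : (ZMod q)[X]).degree + w.degree := degree_mul_le _ _
    _ ≤ 0 + w.degree := by gcongr; exact degree_natCast_le n
    _ < (polyLift p q f).degree := by rwa [zero_add, degree_polyLift hf]

theorem monic_polyLift_add_natCast_mul (hf : f.Monic) {w : (ZMod q)[X]}
    (hw : w.degree < f.degree) (n : ℕ) : (polyLift p q f + n * w).Monic :=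
  (monic_polyLift hf).add_of_left (degree_natCast_mul_lt_degree_polyLift hf hw n)

theorem degree_polyLift_add_natCast_mul (hf : f.Monic) {w : (ZMod q)[X]}
    (hw : w.degree < f.degree) (n : ℕ) : (polyLift p q f + n * w).degree = f.degree := by
  rw [degree_add_eq_left_of_degree_lt (degree_natCast_mul_lt_degree_polyLift hf hw n),
    degree_polyLift hf]

end PolyLift

theorem ZMod.ker_castHom {m n : ℕ} (h : m ∣ n) :
    RingHom.ker (ZMod.castHom h (ZMod m)) = Ideal.span {(m : ZMod n)} := by
  ext a
  obtain ⟨k, rfl⟩ := ZMod.intCast_surjective a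
  rw [RingHom.mem_ker, map_intCast, ZMod.intCast_zmod_eq_zero_iff_dvd, Ideal.mem_span_singleton]
  constructor
  · rintro ⟨c, rfl⟩
    exact ⟨c, by push_cast; rfl⟩
  · rintro ⟨c, hc⟩
    obtain ⟨j, rfl⟩ := ZMod.intCast_surjective c
    have hn : ((k - m * j : ℤ) : ZMod n) = 0 := by push_cast; rw [hc, sub_self]
    rw [ZMod.intCast_zmod_eq_zero_iff_dvd] at hn
    exact (dvd_sub_left (dvd_mul_right _ _)).mp ((Int.natCast_dvd_natCast.mpr h).trans hn)

theorem natCast_ne_zero_of_charP_sq (R : Type*) [AddMonoidWithOne R] {p : ℕ} (hp : 1 < p)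
    [CharP R (p ^ 2)] : (p : R) ≠ 0 := by
  rw [Ne, CharP.cast_eq_zero_iff R (p ^ 2)]
  intro h
  have := Nat.le_of_dvd (by omega) h
  nlinarith

theorem natCast_mul_self_eq_zero_of_charP_sq (R : Type*) [NonAssocSemiring R] (p : ℕ)
    [CharP R (p ^ 2)] : (p : R) * p = 0 := by
  rw [← Nat.cast_mul, ← sq, CharP.cast_eq_zero]

instance Nat.Prime.one_lt_sq' (p : ℕ) [Fact p.Prime] : Fact (1 < p ^ 2) :=
  ⟨Nat.one_lt_pow two_ne_zero (Fact.out : p.Prime).one_lt⟩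

theorem finite_adjoinRoot {A : Type*} [CommRing A] [Finite A] {f : A[X]} (hf : f.Monic) :
    Finite (AdjoinRoot f) :=
  have := hf.finite_adjoinRoot
  Module.finite_of_finite A

theorem charP_adjoinRoot (p : ℕ) [Fact p.Prime] (g : (ZMod p)[X]) [Fact (Irreducible g)] :
    CharP (AdjoinRoot g) p :=
  charP_of_injective_algebraMap (algebraMap (ZMod p) (AdjoinRoot g)).injective p

theorem AdjoinRoot.ker_mk {A : Type*} [CommRing A] (f : A[X]) :
    RingHom.ker (AdjoinRoot.mk f) = Ideal.span {f} :=
  Ideal.mk_ker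

theorem AdjoinRoot.root_X_pow_pow {A : Type*} [CommRing A] (n : ℕ) :
    AdjoinRoot.root (X ^ n : A[X]) ^ n = 0 := by
  rw [← AdjoinRoot.mk_X, ← map_pow, AdjoinRoot.mk_self]

theorem exists_aeval_surjective (F K : Type*) [Field F] [Field K] [Algebra F K] [Finite K] :
    ∃ α : K, Function.Surjective (aeval (R := F) α) := by
  obtain ⟨α, hα⟩ := Field.exists_primitive_element_of_finite_top F K
  refine ⟨α, fun z => ?_⟩
  have hz : z ∈ Algebra.adjoin F {α} := by
    rw [← IntermediateField.adjoin_simple_toSubalgebra_of_isAlgebraic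
      (IsIntegral.of_finite F α).isAlgebraic, hα]
    trivial
  rwa [Algebra.adjoin_singleton_eq_range_aeval] at hz

section NontrivialIdeals

variable {R S : Type*} [CommRing R] [CommRing S]

theorem card_nontrivialIdeals_eq_one_iff :
    Nat.card {I : Ideal R // I ≠ ⊥ ∧ I ≠ ⊤} = 1 ↔
      ∃ J : Ideal R, J ≠ ⊥ ∧ J ≠ ⊤ ∧ ∀ I : Ideal R, I ≠ ⊥ → I ≠ ⊤ → I = J := by
  rw [Nat.card_eq_one_iff_exists]
  constructor
  · rintro ⟨⟨J, hJ⟩, h⟩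
    exact ⟨J, hJ.1, hJ.2, fun I hI hI' => congrArg Subtype.val (h ⟨I, hI, hI'⟩)⟩
  · rintro ⟨J, hJ, hJ', h⟩
    exact ⟨⟨J, hJ, hJ'⟩, fun I => Subtype.ext (h I.1 I.2.1 I.2.2)⟩

theorem IsFiniteLocalWithNontrivialIdeals.of_ringEquiv (e : R ≃+* S) {k p : ℕ}
    (h : IsFiniteLocalWithNontrivialIdeals S k p) : IsFiniteLocalWithNontrivialIdeals R k p := by
  obtain ⟨_, _, _, hcard⟩ := h
  have : Nontrivial R := e.toEquiv.nontrivial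
  have : IsLocalRing R := .of_surjective' e.symm.toRingHom e.symm.surjective
  refine ⟨.of_equiv S e.symm.toEquiv, this, ?_, ?_⟩
  · exact charP_of_injective_ringHom (f := (ResidueField.mapEquiv e).symm.toRingHom)
      (ResidueField.mapEquiv e).symm.injective p
  · rw [← hcard]
    let f := e.idealComapOrderIso
    exact Nat.card_congr (f.toEquiv.subtypeEquiv fun I => and_congr
      (f.injective.ne_iff' f.map_bot).symm (f.injective.ne_iff' f.map_top).symm).symm

theorem isLocalRing_of_isMaximal_span {t : R} (hmax : (Ideal.span {t}).IsMaximal)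
    (ht : t * t = 0) : IsLocalRing R := by
  refine .of_unique_max_ideal ⟨_, hmax, fun M hM => ?_⟩
  have htM : t ∈ M := (hM.isPrime.mem_or_mem (by rw [ht]; exact M.zero_mem)).elim id id
  exact (hmax.eq_of_le hM.ne_top (Ideal.span_singleton_le_iff_mem M |>.mpr htM)).symm

theorem eq_maximalIdeal_of_ne_bot [IsLocalRing R] {t : R} (hm : maximalIdeal R = Ideal.span {t})
    (ht : t * t = 0) {I : Ideal R} (hI : I ≠ ⊥) (hI' : I ≠ ⊤) : I = maximalIdeal R := by
  refine le_antisymm (le_maximalIdeal hI') ?_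
  obtain ⟨z, hzI, hz⟩ := Submodule.exists_mem_ne_zero_of_ne_bot hI
  obtain ⟨c, rfl⟩ := Ideal.mem_span_singleton'.mp (hm ▸ le_maximalIdeal hI' hzI)
  have hc : IsUnit c := by
    by_contra hc
    obtain ⟨d, rfl⟩ := Ideal.mem_span_singleton'.mp (hm ▸ (mem_maximalIdeal c).mpr hc)
    exact hz (by rw [mul_assoc, ht, mul_zero])
  rw [hm, Ideal.span_singleton_le_iff_mem]
  exact (Ideal.unit_mul_mem_iff_mem I hc).mp hzI

theorem isFiniteLocalWithNontrivialIdeals_one_of_ker_eq_span [Finite R] {K : Type*} [Field K]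
    {p : ℕ} [CharP K p] {π : R →+* K} (hπ : Function.Surjective π) {t : R}
    (hker : RingHom.ker π = Ideal.span {t}) (ht0 : t ≠ 0) (ht : t * t = 0) :
    IsFiniteLocalWithNontrivialIdeals R 1 p := by
  have hmax : (Ideal.span {t}).IsMaximal := hker ▸ RingHom.ker_isMaximal_of_surjective π hπ
  have := isLocalRing_of_isMaximal_span hmax ht
  have hm : maximalIdeal R = Ideal.span {t} := (eq_maximalIdeal hmax).symm
  let e : ResidueField R ≃+* K :=
    (Ideal.quotEquivOfEq (hm.trans hker.symm)).trans (RingHom.quotientKerEquivOfSurjective hπ)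
  refine ⟨inferInstance, this,
    charP_of_injective_ringHom (f := e.symm.toRingHom) e.symm.injective p, ?_⟩
  refine card_nontrivialIdeals_eq_one_iff.mpr ⟨_, ?_, (maximalIdeal.isMaximal R).ne_top,
    fun I hI hI' => eq_maximalIdeal_of_ne_bot hm ht hI hI'⟩
  rwa [hm, Ne, Ideal.span_singleton_eq_bot]

theorem injective_of_card_nontrivialIdeals_eq_one [Nontrivial R]
    (hS : Nat.card {I : Ideal S // I ≠ ⊥ ∧ I ≠ ⊤} = 1) (φ : S →+* R) {s : S} (hs : s * s = 0)
    (hφs : φ s ≠ 0) : Function.Injective φ := by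
  obtain ⟨J, -, -, hJ⟩ := card_nontrivialIdeals_eq_one_iff.mp hS
  have hs0 : s ≠ 0 := fun h => hφs (by rw [h, map_zero])
  have hspan : Ideal.span {s} = J := by
    refine hJ _ (by rwa [Ne, Ideal.span_singleton_eq_bot]) fun htop => hs0 ?_
    exact ((Ideal.span_singleton_eq_top.mp htop).mul_right_eq_zero).mp hs
  rw [RingHom.injective_iff_ker_eq_bot]
  by_contra hker
  apply hφs
  rw [← RingHom.mem_ker, hJ _ hker (RingHom.ker_ne_top φ), ← hspan]
  exact Ideal.mem_span_singleton_self s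

theorem surjective_of_residue_comp_surjective [IsLocalRing R] (φ : S →+* R) {s : S}
    (hm : maximalIdeal R = Ideal.span {φ s}) (hs : φ s * φ s = 0)
    (hres : Function.Surjective ((residue R).comp φ)) : Function.Surjective φ := by
  have hlift : ∀ r, ∃ a c, r = φ a + c * φ s := by
    intro r
    obtain ⟨a, ha⟩ := hres (residue R r)
    have hmem : r - φ a ∈ Ideal.span {φ s} := by
      rw [← hm, ← residue_eq_zero_iff, map_sub, ← ha, RingHom.comp_apply, sub_self]
    obtain ⟨c, hc⟩ := Ideal.mem_span_singleton'.mp hmem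
    exact ⟨a, c, by rw [hc]; ring⟩
  intro r
  obtain ⟨a, c, rfl⟩ := hlift r
  obtain ⟨b, d, rfl⟩ := hlift c
  exact ⟨a + b * s, by rw [map_add, map_mul]; linear_combination (-d) * hs⟩

end NontrivialIdeals

theorem isFiniteLocalWithNontrivialIdeals_adjoinRoot_X_sq (K : Type*) [Field K] [Finite K]
    (p : ℕ) [CharP K p] : IsFiniteLocalWithNontrivialIdeals (AdjoinRoot (X ^ 2 : K[X])) 1 p := by
  have := finite_adjoinRoot (monic_X_pow (R := K) 2)
  let π : AdjoinRoot (X ^ 2 : K[X]) →+* K := AdjoinRoot.lift (RingHom.id K) 0 (by simp)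
  have hπ : Function.Surjective π := fun a => ⟨AdjoinRoot.of _ a, AdjoinRoot.lift_of _⟩
  refine isFiniteLocalWithNontrivialIdeals_one_of_ker_eq_span hπ (t := AdjoinRoot.root _)
    (le_antisymm ?_ ?_) ?_ ?_
  · intro z hz
    induction z using AdjoinRoot.induction_on with | _ f => ?_
    rw [RingHom.mem_ker, AdjoinRoot.lift_mk, eval₂_id, ← coeff_zero_eq_eval_zero] at hz
    obtain ⟨h, rfl⟩ := X_dvd_iff.mpr hz
    rw [map_mul, AdjoinRoot.mk_X]
    exact Ideal.mul_mem_right _ _ (Ideal.mem_span_singleton_self _)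
  · rw [Ideal.span_singleton_le_iff_mem, RingHom.mem_ker, AdjoinRoot.lift_root]
  · rw [← AdjoinRoot.mk_X, Ne, AdjoinRoot.mk_eq_zero]
    exact (monic_X_pow 2).not_dvd_of_natDegree_lt X_ne_zero (by simp)
  · rw [← sq, AdjoinRoot.root_X_pow_pow]

theorem ker_adjoinRoot_mk_comp_mapRingHom {A : Type*} [CommRing A] (g : A[X]) (n : ℕ) :
    RingHom.ker ((AdjoinRoot.mk (X ^ n)).comp (mapRingHom (AdjoinRoot.mk g))) =
      Ideal.span {C g, X ^ n} := by
  have hXn : Ideal.span {(X ^ n : (AdjoinRoot g)[X])} =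
      (Ideal.span {X ^ n}).map (mapRingHom (AdjoinRoot.mk g)) := by
    rw [Ideal.map_span, Set.image_singleton, map_pow, coe_mapRingHom, map_X]
  rw [← RingHom.comap_ker, AdjoinRoot.ker_mk, hXn,
    Ideal.comap_map_of_surjective _ (map_surjective _ AdjoinRoot.mk_surjective),
    ← RingHom.ker_eq_comap_bot, ker_mapRingHom, AdjoinRoot.ker_mk, Ideal.map_span,
    Set.image_singleton, Ideal.span_insert, sup_comm]

noncomputable def quotientSpanCXPowEquiv {A : Type*} [CommRing A] (g : A[X]) (n : ℕ) :
    A[X][X] ⧸ Ideal.span {C g, X ^ n} ≃+* AdjoinRoot (X ^ n : (AdjoinRoot g)[X]) :=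
  (Ideal.quotEquivOfEq (ker_adjoinRoot_mk_comp_mapRingHom g n).symm).trans
    (RingHom.quotientKerEquivOfSurjective
      (AdjoinRoot.mk_surjective.comp (map_surjective _ AdjoinRoot.mk_surjective)))

theorem isFiniteLocalWithNontrivialIdeals_quotient_span_C_X_sq {p : ℕ} [Fact p.Prime]
    {g : (ZMod p)[X]} (hg : g.Monic) (hgi : Irreducible g) :
    IsFiniteLocalWithNontrivialIdeals ((ZMod p)[X][X] ⧸ Ideal.span {C g, X ^ 2}) 1 p := by
  have := Fact.mk hgi
  have := finite_adjoinRoot hg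
  have := charP_adjoinRoot p g
  exact .of_ringEquiv (quotientSpanCXPowEquiv g 2)
    (isFiniteLocalWithNontrivialIdeals_adjoinRoot_X_sq (AdjoinRoot g) p)

section SecondModel

variable {p : ℕ} [Fact p.Prime]

local notation "red" => ZMod.castHom (dvd_pow_self p two_ne_zero) (ZMod p)

theorem map_polyLift_add_natCast_mul (g : (ZMod p)[X]) (w : (ZMod (p ^ 2))[X]) :
    (polyLift p (p ^ 2) g + (p : (ZMod (p ^ 2))[X]) * w).map red = g := by
  rw [Polynomial.map_add, map_polyLift, Polynomial.map_mul, Polynomial.map_natCast,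
    CharP.cast_eq_zero, zero_mul, add_zero]

theorem isFiniteLocalWithNontrivialIdeals_adjoinRoot_polyLift_add {g : (ZMod p)[X]}
    (hg : g.Monic) (hgi : Irreducible g) {w : (ZMod (p ^ 2))[X]} (hw : w.degree < g.degree) :
    IsFiniteLocalWithNontrivialIdeals
      (AdjoinRoot (polyLift p (p ^ 2) g + (p : (ZMod (p ^ 2))[X]) * w)) 1 p := by
  have := Fact.mk hgi
  have := charP_adjoinRoot p g
  set F := polyLift p (p ^ 2) g + (p : (ZMod (p ^ 2))[X]) * w
  have hF : F.Monic := monic_polyLift_add_natCast_mul hg hw p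
  have hFg : F.map red = g := map_polyLift_add_natCast_mul g w
  have := finite_adjoinRoot hF
  let π : AdjoinRoot F →+* AdjoinRoot g := AdjoinRoot.lift ((AdjoinRoot.of g).comp red)
    (AdjoinRoot.root g) (by rw [← eval₂_map, hFg, AdjoinRoot.eval₂_root])
  have hπ_mk : ∀ f, π (AdjoinRoot.mk F f) = AdjoinRoot.mk g (f.map red) := fun f => by
    rw [AdjoinRoot.lift_mk, ← eval₂_map, ← AdjoinRoot.aeval_eq, aeval_def,
      AdjoinRoot.algebraMap_eq]
  have hπ : Function.Surjective π := fun z => by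
    induction z using AdjoinRoot.induction_on with | _ q => ?_
    exact ⟨AdjoinRoot.mk F (polyLift p (p ^ 2) q), by rw [hπ_mk, map_polyLift]⟩
  refine isFiniteLocalWithNontrivialIdeals_one_of_ker_eq_span hπ (t := (p : AdjoinRoot F))
    (le_antisymm ?_ ?_) ?_ ?_
  · intro z hz
    induction z using AdjoinRoot.induction_on with | _ f => ?_
    rw [RingHom.mem_ker, hπ_mk, AdjoinRoot.mk_eq_zero] at hz
    obtain ⟨h, hh⟩ := hz
    obtain ⟨h', rfl⟩ := map_surjective red (ZMod.ringHom_surjective red) h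
    have hmem : f - F * h' ∈ RingHom.ker (mapRingHom red) := by
      rw [RingHom.mem_ker, coe_mapRingHom, Polynomial.map_sub, Polynomial.map_mul, hFg, hh,
        sub_self]
    rw [ker_mapRingHom, ZMod.ker_castHom, Ideal.map_span, Set.image_singleton, map_natCast] at hmem
    obtain ⟨c, hc⟩ := Ideal.mem_span_singleton'.mp hmem
    refine Ideal.mem_span_singleton'.mpr ⟨AdjoinRoot.mk F c, ?_⟩
    rw [← map_natCast (AdjoinRoot.mk F), ← map_mul, hc, map_sub, map_mul, AdjoinRoot.mk_self,
      zero_mul, sub_zero]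
  · rw [Ideal.span_singleton_le_iff_mem, RingHom.mem_ker, map_natCast, CharP.cast_eq_zero]
  · rw [← map_natCast (AdjoinRoot.mk F), Ne, AdjoinRoot.mk_eq_zero]
    refine hF.not_dvd_of_natDegree_lt ?_ ?_
    · rw [← C_eq_natCast, Ne, C_eq_zero]
      exact natCast_ne_zero_of_charP_sq _ (Fact.out : p.Prime).one_lt
    · rw [natDegree_natCast, natDegree_eq_of_degree_eq (degree_polyLift_add_natCast_mul hg hw p)]
      exact hgi.natDegree_pos
  · rw [← map_natCast (AdjoinRoot.of F), ← map_mul, natCast_mul_self_eq_zero_of_charP_sq,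
      map_zero]

end SecondModel

section LocalRing

variable {R : Type*} [CommRing R] [IsLocalRing R]

theorem sq_maximalIdeal_eq_bot [IsNoetherianRing R]
    (h : ∀ I : Ideal R, I ≠ ⊥ → I ≠ ⊤ → I = maximalIdeal R) : maximalIdeal R ^ 2 = ⊥ := by
  by_contra hne
  have hidem : IsIdempotentElem (maximalIdeal R) := by
    rw [IsIdempotentElem, ← sq]
    exact h _ hne (ne_top_of_le_ne_top (maximalIdeal.isMaximal R).ne_top
      (Ideal.pow_le_self two_ne_zero))
  obtain hbot | htop := (Ideal.isIdempotentElem_iff_eq_bot_or_top_of_isLocalRing _).mp hidem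
  · exact hne (by rw [hbot, sq, Ideal.mul_bot])
  · exact (maximalIdeal.isMaximal R).ne_top htop

theorem maximalIdeal_eq_span_of_mem (h : ∀ I : Ideal R, I ≠ ⊥ → I ≠ ⊤ → I = maximalIdeal R)
    {t : R} (ht : t ∈ maximalIdeal R) (ht0 : t ≠ 0) : maximalIdeal R = Ideal.span {t} :=
  (h _ (by rwa [Ne, Ideal.span_singleton_eq_bot]) (ne_top_of_le_ne_top
    (maximalIdeal.isMaximal R).ne_top ((Ideal.span_singleton_le_iff_mem _).mpr ht))).symm

theorem henselianLocalRing_of_sq_maximalIdeal_eq_bot (hm : maximalIdeal R ^ 2 = ⊥) :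
    HenselianLocalRing R where
  is_henselian f _ a₀ h₁ h₂ := by
    obtain ⟨u, hu⟩ := h₂
    set y := -(f.eval a₀ * ↑u⁻¹)
    have hy : y ∈ maximalIdeal R := neg_mem (Ideal.mul_mem_right _ _ h₁)
    have hy2 : y ^ 2 = 0 := by rw [← Ideal.mem_bot, ← hm]; exact Ideal.pow_mem_pow hy 2
    refine ⟨a₀ + y, ?_, by rwa [add_sub_cancel_left]⟩
    obtain ⟨k, hk⟩ := binomExpansion f a₀ y
    rw [IsRoot, hk, hy2, ← hu, mul_neg, mul_left_comm, Units.mul_inv, mul_one]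
    ring

theorem residue_eval₂_zmod {m n : ℕ} (h : m ∣ n) (ψ : ZMod n →+* R)
    [Algebra (ZMod m) (ResidueField R)] (x : R) (q : (ZMod n)[X]) :
    residue R (q.eval₂ ψ x) = aeval (residue R x) (q.map (ZMod.castHom h (ZMod m))) := by
  rw [hom_eval₂, aeval_def, eval₂_map]
  congr 1
  exact Subsingleton.elim _ _

variable {p : ℕ} [Fact p.Prime] [Algebra (ZMod p) (ResidueField R)]

theorem exists_eval₂_polyLift_add_eq_zero [CharP R (p ^ 2)]
    (hm : maximalIdeal R = Ideal.span {(p : R)}) {g : (ZMod p)[X]} (hg : g.Monic) {x₀ : R}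
    (hgx : aeval (residue R x₀) g = 0)
    (hsurj : Function.Surjective (aeval (R := ZMod p) (residue R x₀))) :
    ∃ w : (ZMod (p ^ 2))[X], w.degree < g.degree ∧
      (polyLift p (p ^ 2) g + (p : (ZMod (p ^ 2))[X]) * w).eval₂
        (ZMod.castHom (dvd_refl _) R) x₀ = 0 := by
  set ψ : ZMod (p ^ 2) →+* R := ZMod.castHom (dvd_refl _) R
  have hdvd : p ∣ p ^ 2 := dvd_pow_self p two_ne_zero
  have hg₂ : (polyLift p (p ^ 2) g).eval₂ ψ x₀ ∈ Ideal.span {(p : R)} := by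
    rw [← hm, ← residue_eq_zero_iff, residue_eval₂_zmod hdvd, map_polyLift, hgx]
  obtain ⟨c, hc⟩ := Ideal.mem_span_singleton'.mp hg₂
  obtain ⟨q, hq⟩ := hsurj (residue R c)
  set r := q %ₘ g
  have hr : c - (polyLift p (p ^ 2) r).eval₂ ψ x₀ ∈ Ideal.span {(p : R)} := by
    rw [← hm, ← residue_eq_zero_iff, map_sub, residue_eval₂_zmod hdvd, map_polyLift,
      aeval_modByMonic_eq_self_of_root hgx, hq, sub_self]
  obtain ⟨d, hd⟩ := Ideal.mem_span_singleton'.mp hr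
  refine ⟨-polyLift p (p ^ 2) r, ?_, ?_⟩
  · rw [degree_neg]
    exact (degree_polyLift_le r).trans_lt (degree_modByMonic_lt q hg)
  · rw [eval₂_add, eval₂_mul, eval₂_natCast, eval₂_neg, ← hc]
    linear_combination (-(p : R)) * hd + d * natCast_mul_self_eq_zero_of_charP_sq R p

variable [Finite R]

theorem exists_ringEquiv_quotient_span_C_X_sq [CharP R p] {t : R}
    (hm : maximalIdeal R = Ideal.span {t}) (ht0 : t ≠ 0) (ht : t * t = 0) :
    ∃ g : (ZMod p)[X], g.Monic ∧ Irreducible g ∧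
      Nonempty (R ≃+* (ZMod p)[X][X] ⧸ Ideal.span {C g, X ^ 2}) := by
  have hm2 : maximalIdeal R ^ 2 = ⊥ := by
    rw [hm, Ideal.span_singleton_pow, sq, ht, Ideal.span_singleton_eq_bot.mpr rfl]
  have : Finite (ResidueField R) := .of_surjective _ (residue_surjective (R := R))
  obtain ⟨α, hα⟩ := exists_aeval_surjective (ZMod p) (ResidueField R)
  have hint : IsIntegral (ZMod p) α := .of_finite _ _
  set g := minpoly (ZMod p) α
  have := Fact.mk (minpoly.irreducible hint)
  let ψ : ZMod p →+* R := ZMod.castHom (dvd_refl p) R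
  have hres : ∀ x q, residue R (q.eval₂ ψ x) = aeval (residue R x) q := fun x q => by
    rw [residue_eval₂_zmod (dvd_refl p), ZMod.castHom_self, Polynomial.map_id]
  have haeval : ∀ q : (ZMod p)[X], aeval α (q.map ψ) = aeval α q := fun q => by
    rw [aeval_def, eval₂_map, ResidueField.algebraMap_eq,
      Subsingleton.elim ((residue R).comp ψ) (algebraMap _ _), ← aeval_def]
  have hensel := ((HenselianLocalRing.TFAE R).out 0 1).mp
    (henselianLocalRing_of_sq_maximalIdeal_eq_bot hm2)
  obtain ⟨x, hx, hxα⟩ := hensel (g.map ψ) ((minpoly.monic hint).map ψ) α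
    (by rw [haeval]; exact minpoly.aeval _ _)
    (by rw [derivative_map, haeval]
        exact (PerfectField.separable_of_irreducible (minpoly.irreducible hint)
          ).aeval_derivative_ne_zero (minpoly.aeval _ _))
  have hgx : g.eval₂ ψ x = 0 := by rwa [IsRoot, eval_map] at hx
  let τ : AdjoinRoot (X ^ 2 : (AdjoinRoot g)[X]) →+* R :=
    AdjoinRoot.lift (AdjoinRoot.lift ψ x hgx) t (by rw [eval₂_X_pow, sq, ht])
  have hroot : τ (AdjoinRoot.root _) = t := AdjoinRoot.lift_root _
  have := finite_adjoinRoot (minpoly.monic hint)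
  have := charP_adjoinRoot p g
  obtain ⟨-, -, -, hcard⟩ := isFiniteLocalWithNontrivialIdeals_adjoinRoot_X_sq (AdjoinRoot g) p
  have hinj : Function.Injective τ := injective_of_card_nontrivialIdeals_eq_one hcard τ
    (by rw [← sq, AdjoinRoot.root_X_pow_pow]) (by rwa [hroot])
  have hsurj : Function.Surjective τ := by
    refine surjective_of_residue_comp_surjective τ (s := AdjoinRoot.root _) (by rw [hroot, hm])
      (by rw [hroot, ht]) fun z => ?_
    obtain ⟨q, rfl⟩ := hα z
    exact ⟨AdjoinRoot.of _ (AdjoinRoot.mk g q), by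
      rw [RingHom.comp_apply, AdjoinRoot.lift_of, AdjoinRoot.lift_mk, hres, hxα]⟩
  exact ⟨g, minpoly.monic hint, minpoly.irreducible hint,
    ⟨(RingEquiv.ofBijective τ ⟨hinj, hsurj⟩).symm.trans (quotientSpanCXPowEquiv g 2).symm⟩⟩

theorem exists_ringEquiv_adjoinRoot_polyLift_add [CharP R (p ^ 2)]
    (hm : maximalIdeal R = Ideal.span {(p : R)}) :
    ∃ (g : (ZMod p)[X]) (w : (ZMod (p ^ 2))[X]), g.Monic ∧ Irreducible g ∧ w.degree < g.degree ∧
      Nonempty (R ≃+* AdjoinRoot (polyLift p (p ^ 2) g + (p : (ZMod (p ^ 2))[X]) * w)) := by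
  have : Finite (ResidueField R) := .of_surjective _ (residue_surjective (R := R))
  obtain ⟨α, hα⟩ := exists_aeval_surjective (ZMod p) (ResidueField R)
  have hint : IsIntegral (ZMod p) α := .of_finite _ _
  set g := minpoly (ZMod p) α
  obtain ⟨x₀, rfl⟩ := residue_surjective α
  obtain ⟨w, hw, hFx⟩ :=
    exists_eval₂_polyLift_add_eq_zero hm (minpoly.monic hint) (minpoly.aeval _ _) hα
  set F := polyLift p (p ^ 2) g + (p : (ZMod (p ^ 2))[X]) * w
  let τ : AdjoinRoot F →+* R := AdjoinRoot.lift _ x₀ hFx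
  have hτp : τ p = p := map_natCast τ p
  obtain ⟨-, -, -, hcard⟩ := isFiniteLocalWithNontrivialIdeals_adjoinRoot_polyLift_add
    (minpoly.monic hint) (minpoly.irreducible hint) hw
  have hinj : Function.Injective τ :=
    injective_of_card_nontrivialIdeals_eq_one hcard τ (s := (p : AdjoinRoot F))
    (by rw [← map_natCast (AdjoinRoot.of F), ← map_mul,
      natCast_mul_self_eq_zero_of_charP_sq, map_zero])
    (by rw [hτp]; exact natCast_ne_zero_of_charP_sq R (Fact.out : p.Prime).one_lt)
  have hsurj : Function.Surjective τ := by
    refine surjective_of_residue_comp_surjective τ (s := p) (by rw [hτp, hm])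
      (by rw [hτp, natCast_mul_self_eq_zero_of_charP_sq]) fun z => ?_
    obtain ⟨q, rfl⟩ := hα z
    exact ⟨AdjoinRoot.mk F (polyLift p (p ^ 2) q), by
      rw [RingHom.comp_apply, AdjoinRoot.lift_mk, residue_eval₂_zmod (dvd_pow_self p two_ne_zero),
        map_polyLift]⟩
  exact ⟨g, w, minpoly.monic hint, minpoly.irreducible hint, hw,
    ⟨(RingEquiv.ofBijective τ ⟨hinj, hsurj⟩).symm⟩⟩

end LocalRing

theorem exists_model_of_isFiniteLocalWithNontrivialIdeals_one {R : Type*} [CommRing R] {p : ℕ}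
    (hp : p.Prime) (h : IsFiniteLocalWithNontrivialIdeals R 1 p) :
    (∃ g : (ZMod p)[X], g.Monic ∧ Irreducible g ∧
        Nonempty (R ≃+* (ZMod p)[X][X] ⧸ Ideal.span {C g, X ^ 2})) ∨
    (∃ (g : (ZMod p)[X]) (w : (ZMod (p ^ 2))[X]), g.Monic ∧ Irreducible g ∧
        w.degree < g.degree ∧
        Nonempty (R ≃+* (ZMod (p ^ 2))[X] ⧸
          Ideal.span {polyLift p (p ^ 2) g + (p : (ZMod (p ^ 2))[X]) * w})) := by
  have := Fact.mk hp
  obtain ⟨_, _, _, hcard⟩ := h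
  obtain ⟨J, hJ, hJ', hJuniq⟩ := card_nontrivialIdeals_eq_one_iff.mp hcard
  have hm0 : maximalIdeal R ≠ ⊥ := fun hm => hJ (le_bot_iff.mp (hm ▸ le_maximalIdeal hJ'))
  have huniq : ∀ I : Ideal R, I ≠ ⊥ → I ≠ ⊤ → I = maximalIdeal R := fun I hI hI' => by
    rw [hJuniq I hI hI', hJuniq _ hm0 (maximalIdeal.isMaximal R).ne_top]
  have hm2 := sq_maximalIdeal_eq_bot huniq
  let _ := ZMod.algebra (ResidueField R) p
  have hpm : (p : R) ∈ maximalIdeal R := by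
    rw [← residue_eq_zero_iff, map_natCast, CharP.cast_eq_zero]
  have hp2 : ((p ^ 2 : ℕ) : R) = 0 := by
    rw [Nat.cast_pow, ← Ideal.mem_bot, ← hm2]
    exact Ideal.pow_mem_pow hpm 2
  obtain ⟨i, hi, hcharR⟩ := (Nat.dvd_prime_pow hp).mp (ringChar.dvd hp2)
  interval_cases i
  · exact absurd hcharR CharP.ringChar_ne_one
  · have := ringChar.of_eq (hcharR.trans (pow_one p))
    obtain ⟨t, htm, ht0⟩ := Submodule.exists_mem_ne_zero_of_ne_bot hm0
    have ht : t * t = 0 := by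
      rw [← Ideal.mem_bot, ← hm2, sq]
      exact Ideal.mul_mem_mul htm htm
    exact .inl (exists_ringEquiv_quotient_span_C_X_sq (maximalIdeal_eq_span_of_mem huniq htm ht0)
      ht0 ht)
  · have := ringChar.of_eq hcharR
    exact .inr (exists_ringEquiv_adjoinRoot_polyLift_add (maximalIdeal_eq_span_of_mem huniq hpm
      (natCast_ne_zero_of_charP_sq R hp.one_lt)))

/-- Theorem 4.1: `R` is a finite commutative local ring with exactly one nontrivial ideal
and residue field of characteristic `p` iff `R ≅ ℤ_p[X,Y]/(g(X), Y²)` for some monic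
irreducible `g(X) ∈ ℤ_p[X]`, or `R ≅ ℤ_{p²}[X]/(g₂(X) + p·w(X))` for some monic
irreducible `g(X) ∈ ℤ_p[X]` and some `w(X) ∈ ℤ_{p²}[X]` with `deg w < deg g`, where
`g₂` is the coefficientwise lift of `g` to `ℤ_{p²}[X]`.  (`ℤ_p[X,Y]` is modelled as
`Polynomial (Polynomial (ZMod p))`, the outer variable being `Y`.) -/
theorem finite_local_ring_with_one_nontrivial_ideal_iff
    (p : ℕ) (hp : p.Prime) (R : Type*) [CommRing R] :
    IsFiniteLocalWithNontrivialIdeals R 1 p ↔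
    ((∃ g : Polynomial (ZMod p), g.Monic ∧ Irreducible g ∧
        Nonempty (R ≃+* (Polynomial (Polynomial (ZMod p)) ⧸
          Ideal.span {Polynomial.C g, (Polynomial.X : Polynomial (Polynomial (ZMod p))) ^ 2}))) ∨
     (∃ (g : Polynomial (ZMod p)) (w : Polynomial (ZMod (p ^ 2))),
        g.Monic ∧ Irreducible g ∧ w.degree < g.degree ∧
        Nonempty (R ≃+* (Polynomial (ZMod (p ^ 2)) ⧸
          Ideal.span {polyLift p (p ^ 2) g + (p : Polynomial (ZMod (p ^ 2))) * w})))) := by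
  have := Fact.mk hp
  refine ⟨exists_model_of_isFiniteLocalWithNontrivialIdeals_one hp, ?_⟩
  rintro (⟨g, hg, hgi, ⟨e⟩⟩ | ⟨g, w, hg, hgi, hw, ⟨e⟩⟩)
  · exact .of_ringEquiv e (isFiniteLocalWithNontrivialIdeals_quotient_span_C_X_sq hg hgi)
  · exact .of_ringEquiv e (isFiniteLocalWithNontrivialIdeals_adjoinRoot_polyLift_add hg hgi hw)
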